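/- The residual-sum-of-squares decomposition: RSS(D) := yᵀy - yᵀX(XᵀX + D)⁻¹Xᵀy satisfies RSS(D) = yᵀPⱼy - (xⱼᵀPⱼy)²/(dⱼ + xⱼᵀPⱼxⱼ), where Pⱼ = Iₙ - X₋ⱼ(X₋ⱼᵀX₋ⱼ + D₋ⱼ)⁻¹X₋ⱼᵀ. -/

import Mathlib

/-!
Profile out the `j`-th coefficient. For a fixed value `t` of it, take for the remaining
coefficients the ridge fit `w(t)` of `X₋ⱼ` to the partial residual `y - t xⱼ`. Then `(t, w(t))`
satisfies every normal equation `(XᵀX + D) β = Xᵀy` except the `j`-th one, whose defect is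
`t (dⱼ + xⱼᵀPⱼxⱼ) - xⱼᵀPⱼy`. So the ridge solution is `(t*, w(t*))` with
`t* = xⱼᵀPⱼy / (dⱼ + xⱼᵀPⱼxⱼ)`, and `yᵀy - (Xᵀy)ᵀβ` evaluated there is the right-hand side.
-/

open Matrix

/-- The full design matrix `X = [xⱼ, X₋ⱼ]` with the `j`-th column separated out. -/
noncomputable def Xfull {n p : ℕ} (x : Fin n → ℝ) (Xm : Matrix (Fin n) (Fin p) ℝ) :
    Matrix (Fin n) (Unit ⊕ Fin p) ℝ :=
  Matrix.fromCols (fun i _ => x i) Xm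

/-- `Pⱼ = Iₙ - X₋ⱼ(X₋ⱼᵀX₋ⱼ + D₋ⱼ)⁻¹X₋ⱼᵀ`. -/
noncomputable def Pmat {n p : ℕ} (Xm : Matrix (Fin n) (Fin p) ℝ) (dm : Fin p → ℝ) :
    Matrix (Fin n) (Fin n) ℝ :=
  1 - Xm * (Xmᵀ * Xm + Matrix.diagonal dm)⁻¹ * Xmᵀ

theorem Matrix.IsSymm.dotProduct_mulVec_comm {m R : Type*} [Fintype m] [CommSemiring R]
    {S : Matrix m m R} (hS : S.IsSymm) (u v : m → R) : u ⬝ᵥ S *ᵥ v = v ⬝ᵥ S *ᵥ u := by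
  rw [dotProduct_mulVec, ← mulVec_transpose, hS.eq, dotProduct_comm]

theorem isSymm_transpose_mul_self_add_diagonal {m k R : Type*} [Fintype m] [DecidableEq k]
    [CommSemiring R] (X : Matrix m k R) (d : k → R) : (Xᵀ * X + diagonal d).IsSymm :=
  IsSymm.add (transpose_mul _ _) (isSymm_diagonal d)

theorem posDef_transpose_mul_self_add_diagonal {m k : Type*} [Fintype m] [Fintype k]
    [DecidableEq k] (X : Matrix m k ℝ) {d : k → ℝ} (hd : ∀ i, 0 < d i) :
    (Xᵀ * X + diagonal d).PosDef := by
  refine PosDef.posSemidef_add ?_ (posDef_diagonal_iff.mpr hd)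
  simpa only [conjTranspose_eq_transpose_of_trivial] using posSemidef_conjTranspose_mul_self X

section

variable {n p : ℕ} (x y : Fin n → ℝ) (Xm : Matrix (Fin n) (Fin p) ℝ) (dj : ℝ) (dm : Fin p → ℝ)

theorem Xfull_mulVec_sumElim (t : ℝ) (w : Fin p → ℝ) :
    Xfull x Xm *ᵥ Sum.elim (fun _ => t) w = t • x + Xm *ᵥ w := by
  ext i
  simp [Xfull, fromCols, mulVec, dotProduct, mul_comm]

theorem transpose_Xfull_mulVec (v : Fin n → ℝ) :
    (Xfull x Xm)ᵀ *ᵥ v = Sum.elim (fun _ => x ⬝ᵥ v) (Xmᵀ *ᵥ v) := by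
  ext (_ | j) <;> simp [Xfull, fromCols, mulVec, dotProduct]

noncomputable def ridgeCoeffs (v : Fin n → ℝ) : Fin p → ℝ :=
  (Xmᵀ * Xm + diagonal dm)⁻¹ *ᵥ (Xmᵀ *ᵥ v)

theorem gram_add_diagonal_mulVec_ridgeCoeffs (hM : IsUnit (Xmᵀ * Xm + diagonal dm).det)
    (v : Fin n → ℝ) : (Xmᵀ * Xm + diagonal dm) *ᵥ ridgeCoeffs Xm dm v = Xmᵀ *ᵥ v := by
  rw [ridgeCoeffs, mulVec_mulVec, mul_nonsing_inv _ hM, one_mulVec]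

theorem mulVec_ridgeCoeffs (v : Fin n → ℝ) :
    Xm *ᵥ ridgeCoeffs Xm dm v = v - Pmat Xm dm *ᵥ v := by
  rw [Pmat, ridgeCoeffs, sub_mulVec, one_mulVec, sub_sub_cancel, mulVec_mulVec, mulVec_mulVec]

theorem gram_add_diagonal_Xfull_mulVec_sumElim (t : ℝ) (w : Fin p → ℝ) :
    ((Xfull x Xm)ᵀ * Xfull x Xm + diagonal (Sum.elim (fun _ => dj) dm)) *ᵥ
        Sum.elim (fun _ => t) w
      = Sum.elim (fun _ => x ⬝ᵥ (t • x + Xm *ᵥ w) + dj * t)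
          (t • Xmᵀ *ᵥ x + (Xmᵀ * Xm + diagonal dm) *ᵥ w) := by
  rw [add_mulVec, ← mulVec_mulVec, Xfull_mulVec_sumElim, transpose_Xfull_mulVec, add_mulVec,
    ← mulVec_mulVec, mulVec_add, mulVec_smul]
  ext (_ | j) <;> simp [mulVec_diagonal, add_assoc]

noncomputable def profileCoeffs (t : ℝ) : Unit ⊕ Fin p → ℝ :=
  Sum.elim (fun _ => t) (ridgeCoeffs Xm dm (y - t • x))

theorem gram_add_diagonal_mulVec_profileCoeffs (hM : IsUnit (Xmᵀ * Xm + diagonal dm).det)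
    (t : ℝ) :
    ((Xfull x Xm)ᵀ * Xfull x Xm + diagonal (Sum.elim (fun _ => dj) dm)) *ᵥ
        profileCoeffs x y Xm dm t
      = (Xfull x Xm)ᵀ *ᵥ y +
        Pi.single (Sum.inl ()) (t * (dj + x ⬝ᵥ Pmat Xm dm *ᵥ x) - x ⬝ᵥ Pmat Xm dm *ᵥ y) := by
  rw [profileCoeffs, gram_add_diagonal_Xfull_mulVec_sumElim,
    gram_add_diagonal_mulVec_ridgeCoeffs Xm dm hM, transpose_Xfull_mulVec, mulVec_ridgeCoeffs]
  ext (⟨⟩ | j)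
  · simp only [Sum.elim_inl, Pi.add_apply, Pi.single_eq_same, mulVec_sub, mulVec_smul,
      dotProduct_add, dotProduct_sub, dotProduct_smul, smul_eq_mul]
    ring
  · simp [mulVec_sub, mulVec_smul]

theorem isSymm_Pmat : (Pmat Xm dm).IsSymm := by
  have hM := (isSymm_transpose_mul_self_add_diagonal Xm dm).inv
  rw [Pmat, IsSymm, transpose_sub, transpose_one, transpose_mul, transpose_mul,
    transpose_transpose, hM.eq, Matrix.mul_assoc]

theorem transpose_Xfull_mulVec_dotProduct_profileCoeffs (t : ℝ) :
    (Xfull x Xm)ᵀ *ᵥ y ⬝ᵥ profileCoeffs x y Xm dm t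
      = y ⬝ᵥ y - y ⬝ᵥ Pmat Xm dm *ᵥ y + t * x ⬝ᵥ Pmat Xm dm *ᵥ y := by
  have hsymm := (isSymm_Pmat Xm dm).dotProduct_mulVec_comm y x
  have hunit : (fun _ : Unit => x ⬝ᵥ y) ⬝ᵥ (fun _ => t) = x ⬝ᵥ y * t := Fintype.sum_unique _
  rw [transpose_Xfull_mulVec, profileCoeffs, sumElim_dotProduct_sumElim, hunit,
    mulVec_transpose, ← dotProduct_mulVec, mulVec_ridgeCoeffs, mulVec_sub, mulVec_smul]
  simp only [dotProduct_sub, dotProduct_smul, smul_eq_mul, hsymm, dotProduct_comm y x]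
  ring

/-- Otherwise `profileCoeffs x 0 Xm dm 1`, whose `j`-th entry is `1`, would lie in the kernel of
`XᵀX + D`. -/
theorem dj_add_dotProduct_Pmat_mulVec_ne_zero
    (hA : IsUnit ((Xfull x Xm)ᵀ * Xfull x Xm + diagonal (Sum.elim (fun _ => dj) dm)).det)
    (hM : IsUnit (Xmᵀ * Xm + diagonal dm).det) : dj + x ⬝ᵥ Pmat Xm dm *ᵥ x ≠ 0 := by
  intro hs
  have h := gram_add_diagonal_mulVec_profileCoeffs x 0 Xm dj dm hM 1
  rw [hs, mulVec_zero, mulVec_zero, dotProduct_zero, mul_zero, sub_zero, Pi.single_zero,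
    zero_add] at h
  have := congrFun (eq_zero_of_mulVec_eq_zero hA.ne_zero h) (Sum.inl ())
  simp [profileCoeffs] at this

theorem inv_mulVec_transpose_Xfull_mulVec
    (hA : IsUnit ((Xfull x Xm)ᵀ * Xfull x Xm + diagonal (Sum.elim (fun _ => dj) dm)).det)
    (hM : IsUnit (Xmᵀ * Xm + diagonal dm).det) :
    ((Xfull x Xm)ᵀ * Xfull x Xm + diagonal (Sum.elim (fun _ => dj) dm))⁻¹ *ᵥ
        ((Xfull x Xm)ᵀ *ᵥ y)
      = profileCoeffs x y Xm dm (x ⬝ᵥ Pmat Xm dm *ᵥ y / (dj + x ⬝ᵥ Pmat Xm dm *ᵥ x)) := by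
  have h := gram_add_diagonal_mulVec_profileCoeffs x y Xm dj dm hM
    (x ⬝ᵥ Pmat Xm dm *ᵥ y / (dj + x ⬝ᵥ Pmat Xm dm *ᵥ x))
  rw [div_mul_cancel₀ _ (dj_add_dotProduct_Pmat_mulVec_ne_zero x Xm dj dm hA hM), sub_self,
    Pi.single_zero, add_zero] at h
  rw [← h, mulVec_mulVec, nonsing_inv_mul _ hA, one_mulVec]

theorem rss_eq_of_isUnit
    (hA : IsUnit ((Xfull x Xm)ᵀ * Xfull x Xm + diagonal (Sum.elim (fun _ => dj) dm)).det)
    (hM : IsUnit (Xmᵀ * Xm + diagonal dm).det) :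
    y ⬝ᵥ y - (Xfull x Xm)ᵀ *ᵥ y ⬝ᵥ
        ((Xfull x Xm)ᵀ * Xfull x Xm + diagonal (Sum.elim (fun _ => dj) dm))⁻¹ *ᵥ
          ((Xfull x Xm)ᵀ *ᵥ y)
      = y ⬝ᵥ Pmat Xm dm *ᵥ y
        - (x ⬝ᵥ Pmat Xm dm *ᵥ y) ^ 2 / (dj + x ⬝ᵥ Pmat Xm dm *ᵥ x) := by
  rw [inv_mulVec_transpose_Xfull_mulVec x y Xm dj dm hA hM,
    transpose_Xfull_mulVec_dotProduct_profileCoeffs]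
  ring

end

/-- RSS decomposition:
`yᵀy - yᵀX(XᵀX + D)⁻¹Xᵀy = yᵀPⱼy - (xⱼᵀPⱼy)²/(dⱼ + xⱼᵀPⱼxⱼ)`. -/
theorem stmt6 {n p : ℕ} (x : Fin n → ℝ) (Xm : Matrix (Fin n) (Fin p) ℝ)
    (y : Fin n → ℝ) (dj : ℝ) (hdj : 0 < dj) (dm : Fin p → ℝ) (hdm : ∀ j, 0 < dm j) :
    y ⬝ᵥ y - ((Xfull x Xm)ᵀ.mulVec y) ⬝ᵥ
        (((Xfull x Xm)ᵀ * Xfull x Xm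
          + Matrix.diagonal (Sum.elim (fun _ => dj) dm))⁻¹).mulVec ((Xfull x Xm)ᵀ.mulVec y)
      = y ⬝ᵥ (Pmat Xm dm).mulVec y
        - (x ⬝ᵥ (Pmat Xm dm).mulVec y)^2 / (dj + x ⬝ᵥ (Pmat Xm dm).mulVec x) := by
  have hd : ∀ i, 0 < Sum.elim (fun _ : Unit => dj) dm i := by
    rintro (_ | j)
    exacts [hdj, hdm j]
  exact rss_eq_of_isUnit x y Xm dj dm
    (posDef_transpose_mul_self_add_diagonal _ hd).det_pos.ne'.isUnit
    (posDef_transpose_mul_self_add_diagonal Xm hdm).det_pos.ne'.isUnit
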